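/- arXiv:1809.09151 — 4 statements merged into one kernel-verified Lean document; each statement's English description precedes it below -/
import Mathlib

section
/- Every T-tame pre-index pair in an isolating neighborhood A is a pre-index pair in A. That is, if (K₁, K₂) is a pair of compact subsets of A such that (i) there is a compact set A' ⊆ int(A) containing A^{[-T,T]} with the property that whenever x ∈ K₁ ∩ A^{[0,T']} for some T' ≥ T one has φ(x,[0,T'−T]) ⊆ A', and (ii) K₂ ∩ A^{[0,T]} = ∅, then: for every x ∈ K₁ with φ(x,[0,∞)) ⊆ A one has φ(x,[0,∞)) ⊆ int(A), and K₂ ∩ A⁺ = ∅. -/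
open Set

theorem stmt_3 {Ω : Type*} [TopologicalSpace Ω]
    (φ : Ω → ℝ → Ω)
    (hcont : Continuous fun p : Ω × ℝ => φ p.1 p.2)
    (hzero : ∀ x, φ x 0 = x)
    (hadd : ∀ x s t, φ (φ x s) t = φ x (s + t))
    (A K₁ K₂ : Set Ω) (T : ℝ) (hT : 0 < T)
    (hAcomp : IsCompact A)
    (hiso : {x ∈ A | ∀ t : ℝ, φ x t ∈ A} ⊆ interior A)
    (hK₁ : IsCompact K₁) (hK₂ : IsCompact K₂)
    (hK₁A : K₁ ⊆ A) (hK₂A : K₂ ⊆ A)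
    (htame₁ : ∃ A' : Set Ω, IsCompact A' ∧ A' ⊆ interior A ∧
      {x | ∀ t ∈ Set.Icc (-T) T, φ x t ∈ A} ⊆ A' ∧
      ∀ x ∈ K₁, ∀ T' : ℝ, T ≤ T' → (∀ t ∈ Set.Icc 0 T', φ x t ∈ A) →
        ∀ t ∈ Set.Icc 0 (T' - T), φ x t ∈ A')
    (htame₂ : K₂ ∩ {x | ∀ t ∈ Set.Icc 0 T, φ x t ∈ A} = ∅) :
    (∀ x ∈ K₁, (∀ t : ℝ, 0 ≤ t → φ x t ∈ A) → ∀ t : ℝ, 0 ≤ t → φ x t ∈ interior A) ∧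
    K₂ ∩ {x | ∀ t : ℝ, 0 ≤ t → φ x t ∈ A} = ∅ := by
  obtain ⟨A', _, hA'int, _, hA'⟩ := htame₁
  constructor
  · intro x hx hpos t ht
    apply hA'int
    have := hA' x hx (t + T) (by linarith) (fun s hs => hpos s hs.1) t
      ⟨ht, by simp [le_refl]⟩
    exact this
  · ext x
    simp only [mem_inter_iff, mem_setOf_eq, mem_empty_iff_false, iff_false, not_and]
    intro hx hpos
    have : x ∈ K₂ ∩ {x | ∀ t ∈ Set.Icc 0 T, φ x t ∈ A} :=
      ⟨hx, fun t ht => hpos t ht.1⟩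
    rw [htame₂] at this
    exact this
end

section
/- Let (N, L) be a T-tame index pair in an isolating neighborhood A and let x ∈ N. Then the following two conditions are equivalent: (1) φ(x,[0,3T]) ⊆ A and φ(x,[T,3T]) ⊆ N'∖L'; (2) φ(x,[0,2T]) ⊆ N∖L and φ(x,[T,3T]) ⊆ N'∖L'. Here (N', L') is any other index pair contained in A. -/
open Set

/-- The maximal invariant subset of `A` for the flow `φ`. -/
def flowInv {Ω : Type*} (φ : Ω → ℝ → Ω) (A : Set Ω) : Set Ω :=
  {x ∈ A | ∀ t : ℝ, φ x t ∈ A}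

/-- `L` is positively invariant in `A`. -/
def PosInvIn {Ω : Type*} (φ : Ω → ℝ → Ω) (L A : Set Ω) : Prop :=
  ∀ x ∈ L, ∀ t : ℝ, 0 < t → (∀ s ∈ Set.Icc 0 t, φ x s ∈ A) → ∀ s ∈ Set.Icc 0 t, φ x s ∈ L

/-- `(N, L)` is an index pair for the isolated invariant set `S`. -/
def IsIndexPair {Ω : Type*} [TopologicalSpace Ω] (φ : Ω → ℝ → Ω) (S N L : Set Ω) : Prop :=
  IsCompact N ∧ IsCompact L ∧ L ⊆ N ∧
  flowInv φ (closure (N \ L)) = S ∧ S ⊆ interior (N \ L) ∧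
  (∀ x ∈ N, ∀ t : ℝ, 0 < t → φ x t ∉ N → ∃ τ ∈ Set.Ico 0 t, φ x τ ∈ L) ∧
  PosInvIn φ L N

theorem stmt_13 {Ω : Type*} [TopologicalSpace Ω]
    (φ : Ω → ℝ → Ω)
    (hcont : Continuous fun p : Ω × ℝ => φ p.1 p.2)
    (hzero : ∀ x, φ x 0 = x)
    (hadd : ∀ x s t, φ (φ x s) t = φ x (s + t))
    (A N L N' L' : Set Ω) (T : ℝ) (hT : 0 < T)
    (hAcomp : IsCompact A)
    (hiso : flowInv φ A ⊆ interior A)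
    (hNA : N ⊆ A) (hN'A : N' ⊆ A)
    (hpair : IsIndexPair φ (flowInv φ A) N L)
    (hpair' : IsIndexPair φ (flowInv φ A) N' L')
    (htameN : PosInvIn φ N A) (htameL : PosInvIn φ L A)
    (htame2 : {x | ∀ t ∈ Set.Icc (-T) T, φ x t ∈ A} ⊆ N)
    (htame3 : {x | ∀ t ∈ Set.Icc 0 T, φ x t ∈ A} ∩ L = ∅) :
    ∀ x ∈ N,
      ((∀ t ∈ Set.Icc 0 (3 * T), φ x t ∈ A) ∧
        (∀ t ∈ Set.Icc T (3 * T), φ x t ∈ N' \ L')) ↔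
      ((∀ t ∈ Set.Icc 0 (2 * T), φ x t ∈ N \ L) ∧
        (∀ t ∈ Set.Icc T (3 * T), φ x t ∈ N' \ L')) := by
  intro x hx
  constructor
  · rintro ⟨hA, hN'⟩
    refine ⟨fun t ht => ?_, hN'⟩
    have hN : ∀ s ∈ Set.Icc (0:ℝ) (3*T), φ x s ∈ N :=
      htameN x hx (3*T) (by linarith) hA
    refine ⟨hN t ⟨ht.1, by linarith [ht.2]⟩, fun hL => ?_⟩
    have hmem : φ x t ∈ {y | ∀ s ∈ Set.Icc (0:ℝ) T, φ y s ∈ A} ∩ L := by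
      refine ⟨fun s hs => ?_, hL⟩
      rw [hadd]
      exact hA (t + s) ⟨by linarith [ht.1, hs.1], by linarith [ht.2, hs.2]⟩
    rw [htame3] at hmem
    exact hmem
  · rintro ⟨hNL, hN'⟩
    refine ⟨fun t ht => ?_, hN'⟩
    rcases le_or_gt t (2*T) with h | h
    · exact hNA (hNL t ⟨ht.1, h⟩).1
    · exact hN'A (hN' t ⟨by linarith, ht.2⟩).1
end

section
/- Let (A₁, A₂) be a strong Morse decomposition of an isolating neighborhood A and let (K₃, K₄) be a pre-index pair in A. Define K₃' := K₃ ∩ A₁ and K₄' := (K₄ ∩ A₁) ∪ (K₃ ∩ A₁ ∩ A₂). Then (K₃', K₄') is a pre-index pair in A₁. -/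
open Set

theorem stmt_15 {Ω : Type*} [TopologicalSpace Ω] [T2Space Ω]
    (φ : Ω → ℝ → Ω)
    (hcont : Continuous fun p : Ω × ℝ => φ p.1 p.2)
    (hzero : ∀ x, φ x 0 = x)
    (hadd : ∀ x s t, φ (φ x s) t = φ x (s + t))
    (A A₁ A₂ K₃ K₄ : Set Ω)
    (hAcomp : IsCompact A)
    (hiso : {x ∈ A | ∀ t : ℝ, φ x t ∈ A} ⊆ interior A)
    (hA₁ : IsCompact A₁) (hA₂ : IsCompact A₂)
    (hA₁A : A₁ ⊆ A) (hA₂A : A₂ ⊆ A)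
    (hunion : A = A₁ ∪ A₂)
    (hmorse : ∀ x ∈ A₁ ∩ A₂, ∃ ε : ℝ, 0 < ε ∧
      (∀ t ∈ Set.Ioo (0 : ℝ) ε, φ x t ∉ A₁) ∧
      (∀ t ∈ Set.Ioo (-ε) (0 : ℝ), φ x t ∉ A₂))
    (hK₃ : IsCompact K₃) (hK₄ : IsCompact K₄)
    (hK₃A : K₃ ⊆ A) (hK₄A : K₄ ⊆ A)
    (hpre₁ : ∀ x ∈ K₃, (∀ t : ℝ, 0 ≤ t → φ x t ∈ A) → ∀ t : ℝ, 0 ≤ t → φ x t ∈ interior A)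
    (hpre₂ : K₄ ∩ {x | ∀ t : ℝ, 0 ≤ t → φ x t ∈ A} = ∅) :
    IsCompact (K₃ ∩ A₁) ∧
    IsCompact ((K₄ ∩ A₁) ∪ (K₃ ∩ A₁ ∩ A₂)) ∧
    K₃ ∩ A₁ ⊆ A₁ ∧
    (K₄ ∩ A₁) ∪ (K₃ ∩ A₁ ∩ A₂) ⊆ A₁ ∧
    (∀ x ∈ K₃ ∩ A₁, (∀ t : ℝ, 0 ≤ t → φ x t ∈ A₁) →
      ∀ t : ℝ, 0 ≤ t → φ x t ∈ interior A₁) ∧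
    ((K₄ ∩ A₁) ∪ (K₃ ∩ A₁ ∩ A₂)) ∩ {x | ∀ t : ℝ, 0 ≤ t → φ x t ∈ A₁} = ∅ := by
  refine ⟨hK₃.inter_right hA₁.isClosed,
    (hK₄.inter_right hA₁.isClosed).union
      ((hK₃.inter_right hA₁.isClosed).inter_right hA₂.isClosed),
    inter_subset_right,
    union_subset (inter_subset_right)
      (inter_subset_left.trans inter_subset_right),
    ?_, ?_⟩
  · rintro x ⟨hxK, hxA₁⟩ horb t ht
    have hy₁ : φ x t ∈ A₁ := horb t ht
    have hyint : φ x t ∈ interior A :=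
      hpre₁ x hxK (fun s hs => hA₁A (horb s hs)) t ht
    by_cases hy₂ : φ x t ∈ A₂
    · obtain ⟨ε, hε, h1, _⟩ := hmorse _ ⟨hy₁, hy₂⟩
      exfalso
      apply h1 (ε/2) ⟨by linarith, by linarith⟩
      rw [hadd]
      exact horb _ (by linarith)
    · have hopen : IsOpen (interior A \ A₂) :=
        isOpen_interior.sdiff hA₂.isClosed
      have hsub : interior A \ A₂ ⊆ A₁ := by
        intro z ⟨hz1, hz2⟩
        rcases hunion ▸ interior_subset hz1 with h | h
        · exact h
        · exact absurd h hz2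
      exact hopen.subset_interior_iff.mpr hsub ⟨hyint, hy₂⟩
  · ext x
    simp only [mem_inter_iff, mem_union, mem_setOf_eq, mem_empty_iff_false, iff_false, not_and]
    rintro (⟨hxK₄, hxA₁⟩ | ⟨⟨hxK₃, hxA₁⟩, hxA₂⟩) horb
    · have : x ∈ K₄ ∩ {x | ∀ t : ℝ, 0 ≤ t → φ x t ∈ A} :=
        ⟨hxK₄, fun t ht => hA₁A (horb t ht)⟩
      rw [hpre₂] at this
      exact this
    · obtain ⟨ε, hε, h1, _⟩ := hmorse x ⟨hxA₁, hxA₂⟩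
      exact h1 (ε/2) ⟨by linarith, by linarith⟩ (horb _ (by linarith))
end

section
/- For any T > 1, if A is a (T−1)-tame isolating neighborhood (i.e. A^{[-(T-1),T-1]} ⊆ int(A)) and (K₁, K₂) is a (T−1)-tame pre-index pair in A, then setting K̃₁ := K₁ ∪ A^{[-T,T]}, the pair (K̃₁, K₂) is a pre-index pair in A. -/
open Set

theorem stmt_18 {Ω : Type*} [TopologicalSpace Ω]
    (φ : Ω → ℝ → Ω)
    (hcont : Continuous fun p : Ω × ℝ => φ p.1 p.2)
    (hzero : ∀ x, φ x 0 = x)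
    (hadd : ∀ x s t, φ (φ x s) t = φ x (s + t))
    (A K₁ K₂ : Set Ω) (T : ℝ) (hT : 1 < T)
    (hAcomp : IsCompact A)
    (htameA : {x | ∀ t ∈ Set.Icc (-(T - 1)) (T - 1), φ x t ∈ A} ⊆ interior A)
    (hK₁ : IsCompact K₁) (hK₂ : IsCompact K₂)
    (hK₁A : K₁ ⊆ A) (hK₂A : K₂ ⊆ A)
    (htame₁ : ∃ A' : Set Ω, IsCompact A' ∧ A' ⊆ interior A ∧
      {x | ∀ t ∈ Set.Icc (-(T - 1)) (T - 1), φ x t ∈ A} ⊆ A' ∧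
      ∀ x ∈ K₁, ∀ T' : ℝ, T - 1 ≤ T' → (∀ t ∈ Set.Icc 0 T', φ x t ∈ A) →
        ∀ t ∈ Set.Icc 0 (T' - (T - 1)), φ x t ∈ A')
    (htame₂ : K₂ ∩ {x | ∀ t ∈ Set.Icc 0 (T - 1), φ x t ∈ A} = ∅) :
    (∀ x ∈ K₁ ∪ {x | ∀ t ∈ Set.Icc (-T) T, φ x t ∈ A},
      (∀ t : ℝ, 0 ≤ t → φ x t ∈ A) → ∀ t : ℝ, 0 ≤ t → φ x t ∈ interior A) ∧
    K₂ ∩ {x | ∀ t : ℝ, 0 ≤ t → φ x t ∈ A} = ∅ := by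
  constructor
  · rintro x (hx | hx) hfwd t ht
    · obtain ⟨A', _, hA'int, _, hA'⟩ := htame₁
      have h1 : (0:ℝ) ≤ T - 1 := by linarith
      have := hA' x hx (t + (T - 1)) (by linarith)
        (fun s hs => hfwd s hs.1) t ⟨ht, by linarith⟩
      exact hA'int this
    · apply htameA
      intro s hs
      rw [hadd]
      rcases le_or_gt 0 (t + s) with h | h
      · exact hfwd _ h
      · exact hx _ ⟨by linarith [hs.1], by linarith [hs.2]⟩
  · rw [← Set.subset_empty_iff, ← htame₂]
    apply Set.inter_subset_inter_right
    intro x hx t htt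
    exact hx t htt.1
end
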